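/- Let C be a locally finite EI category of type A∞ satisfying the transitivity condition, and k any commutative ring. If V is a Noetherian kC-module, then for all sufficiently large j, the map V_j → V_{j+1} given by the action of α_j ∈ C(j,j+1) is injective. -/

import Mathlib

/-- A skeletal locally finite EI category with objects the non-negative
integers and `Hom i j` nonempty iff `i ≤ j`. -/
structure EICat where
  Hom : ℕ → ℕ → Type
  idm : ∀ i, Hom i i
  comp : ∀ {i j l : ℕ}, Hom j l → Hom i j → Hom i l
  id_comp : ∀ {i j : ℕ} (f : Hom i j), comp (idm j) f = f
  comp_id : ∀ {i j : ℕ} (f : Hom i j), comp f (idm i) = f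
  assoc : ∀ {i j l m : ℕ} (f : Hom l m) (g : Hom j l) (h : Hom i j),
    comp (comp f g) h = comp f (comp g h)
  homFinite : ∀ i j, Finite (Hom i j)
  ei : ∀ (i : ℕ) (f : Hom i i), ∃ g : Hom i i, comp f g = idm i ∧ comp g f = idm i
  nonempty_iff : ∀ i j, Nonempty (Hom i j) ↔ i ≤ j

/-- A morphism is an isomorphism. -/
def EICat.IsIso (C : EICat) {i j : ℕ} (f : C.Hom i j) : Prop :=
  ∃ g : C.Hom j i, C.comp f g = C.idm j ∧ C.comp g f = C.idm i

/-- A morphism is unfactorizable. -/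
def EICat.Unfact (C : EICat) {i j : ℕ} (f : C.Hom i j) : Prop :=
  ¬ C.IsIso f ∧ ∀ (l : ℕ) (b₂ : C.Hom i l) (b₁ : C.Hom l j),
    f = C.comp b₁ b₂ → C.IsIso b₁ ∨ C.IsIso b₂

/-- `C` is of type `A∞`: the underlying quiver of unfactorizable morphisms is
`0 → 1 → 2 → ⋯`. -/
def EICat.TypeAInf (C : EICat) : Prop :=
  ∀ i j : ℕ, (∃ f : C.Hom i j, C.Unfact f) ↔ j = i + 1

/-- The transitivity condition: `G_{i+1}` acts transitively on `C(i, i+1)`. -/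
def EICat.TransCond (C : EICat) : Prop :=
  ∀ (i : ℕ) (f g : C.Hom i (i + 1)), ∃ e : C.Hom (i + 1) (i + 1), C.comp e f = g

/-- A `kC`-module: a (covariant) functor from `C` to `k`-modules. -/
structure CMod (k : Type) [CommRing k] (C : EICat) where
  V : ℕ → Type
  [acg : ∀ i, AddCommGroup (V i)]
  [mod : ∀ i, Module k (V i)]
  act : ∀ {i j : ℕ}, C.Hom i j → V i →ₗ[k] V j
  act_id : ∀ i : ℕ, act (C.idm i) = LinearMap.id
  act_comp : ∀ {i j l : ℕ} (f : C.Hom j l) (g : C.Hom i j),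
    act (C.comp f g) = (act f).comp (act g)

attribute [instance] CMod.acg CMod.mod

variable {k : Type} [CommRing k] {C : EICat}

/-- A family of `k`-submodules `W i ⊆ V i` is a `kC`-submodule if it is closed
under the action of all morphisms of `C`. -/
def CMod.Closed (M : CMod k C) (W : ∀ i, Submodule k (M.V i)) : Prop :=
  ∀ (i j : ℕ) (f : C.Hom i j) (x : M.V i), x ∈ W i → M.act f x ∈ W j

/-- The `kC`-module `M` is finitely generated: there is a finite family of
homogeneous elements contained in no proper `kC`-submodule. -/
def CMod.FG (M : CMod k C) : Prop :=
  ∃ (n : ℕ) (d : Fin n → ℕ) (v : ∀ m : Fin n, M.V (d m)),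
    ∀ W : ∀ i, Submodule k (M.V i), M.Closed W →
      (∀ m : Fin n, v m ∈ W (d m)) → ∀ i, W i = ⊤

/-- A `kC`-submodule `W` of `M` is finitely generated: it contains a finite
family of homogeneous elements not all contained in any smaller
`kC`-submodule. -/
def CMod.SubFG (M : CMod k C) (W : ∀ i, Submodule k (M.V i)) : Prop :=
  ∃ (n : ℕ) (d : Fin n → ℕ) (v : ∀ m : Fin n, M.V (d m)),
    (∀ m : Fin n, v m ∈ W (d m)) ∧
    ∀ W' : ∀ i, Submodule k (M.V i), M.Closed W' →
      (∀ m : Fin n, v m ∈ W' (d m)) → ∀ i, W i ≤ W' i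

/-- The `kC`-module `M` is Noetherian: every `kC`-submodule is finitely
generated. -/
def CMod.Noetherian (M : CMod k C) : Prop :=
  ∀ W : ∀ i, Submodule k (M.V i), M.Closed W → M.SubFG W

/-! Under the `A∞` and transitivity conditions every morphism `i → j` with `i < j` factors through
any fixed morphism `i → i + 1`, so any two parallel morphisms differ by an endomorphism of their
target. Hence a vector killed by some morphism into `j` is killed by every morphism into every
`l ≥ j`. These eventually-vanishing vectors form a `kC`-submodule; its finitely many generators all
vanish beyond a common bound `N`, hence so does the whole submodule, and in degrees `j ≥ N` (take
the identity) it is zero. It contains the kernel of `α_j`. -/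
namespace EICat

theorem le_of_hom {i j : ℕ} (f : C.Hom i j) : i ≤ j :=
  (C.nonempty_iff i j).1 ⟨f⟩

theorem not_isIso_of_lt {i j : ℕ} (hij : i < j) (f : C.Hom i j) : ¬ C.IsIso f := by
  rintro ⟨g, -, -⟩
  exact absurd (C.le_of_hom g) (Nat.not_le.2 hij)

theorem lt_of_not_isIso {i j : ℕ} {f : C.Hom i j} (hf : ¬ C.IsIso f) : i < j := by
  rcases (C.le_of_hom f).lt_or_eq with hij | rfl
  · exact hij
  · exact absurd (C.ei i f) hf

theorem exists_comp_eq_of_lt (hA : C.TypeAInf) (hT : C.TransCond) {i j : ℕ} (hij : i < j)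
    (a : C.Hom i (i + 1)) (f : C.Hom i j) : ∃ h : C.Hom (i + 1) j, C.comp h a = f := by
  induction j using Nat.strong_induction_on generalizing i with
  | _ j ih =>
    by_cases hf : C.Unfact f
    · obtain rfl : j = i + 1 := (hA i j).1 ⟨f, hf⟩
      exact hT i a f
    · have hfact : ∃ (l : ℕ) (b₂ : C.Hom i l) (b₁ : C.Hom l j),
          f = C.comp b₁ b₂ ∧ ¬ C.IsIso b₁ ∧ ¬ C.IsIso b₂ := by
        simpa [Unfact, C.not_isIso_of_lt hij f] using hf
      obtain ⟨l, b₂, b₁, rfl, hb₁, hb₂⟩ := hfact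
      obtain ⟨h, rfl⟩ := ih l (C.lt_of_not_isIso hb₁) (C.lt_of_not_isIso hb₂) a b₂
      exact ⟨C.comp b₁ h, C.assoc _ _ _⟩

theorem exists_comp_eq (hA : C.TypeAInf) (hT : C.TransCond) {i j : ℕ} (f g : C.Hom i j) :
    ∃ u : C.Hom j j, C.comp u g = f := by
  rcases (C.le_of_hom f).lt_or_eq with hij | rfl
  · obtain ⟨a⟩ := (C.nonempty_iff i (i + 1)).2 (Nat.le_succ i)
    obtain ⟨f', rfl⟩ := C.exists_comp_eq_of_lt hA hT hij a f
    obtain ⟨g', rfl⟩ := C.exists_comp_eq_of_lt hA hT hij a g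
    obtain ⟨u, rfl⟩ := exists_comp_eq hA hT f' g'
    exact ⟨u, (C.assoc _ _ _).symm⟩
  · obtain ⟨g', -, hg'⟩ := C.ei i g
    exact ⟨C.comp f g', by rw [C.assoc, hg', C.comp_id]⟩
termination_by j - i

end EICat

namespace CMod

variable (M : CMod k C)

def killedFrom (N i : ℕ) : Submodule k (M.V i) where
  carrier := {x | ∀ l, N ≤ l → ∀ f : C.Hom i l, M.act f x = 0}
  add_mem' hx hy l hl f := by rw [map_add, hx l hl f, hy l hl f, add_zero]
  zero_mem' _ _ f := map_zero (M.act f)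
  smul_mem' c x hx l hl f := by rw [map_smul, hx l hl f, smul_zero]

theorem killedFrom_mono {N N' : ℕ} (h : N ≤ N') (i : ℕ) :
    M.killedFrom N i ≤ M.killedFrom N' i :=
  fun _ hx l hl f => hx l (h.trans hl) f

theorem killedFrom_closed (N : ℕ) : M.Closed (M.killedFrom N) := by
  intro i j g x hx l hl f
  rw [← LinearMap.comp_apply, ← M.act_comp]
  exact hx l hl _

theorem killedFrom_eq_bot {N i : ℕ} (h : N ≤ i) : M.killedFrom N i = ⊥ := by
  refine eq_bot_iff.2 fun x hx => ?_
  simpa [M.act_id] using hx i h (C.idm i)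

def eventuallyZero (i : ℕ) : Submodule k (M.V i) where
  carrier := {x | ∃ N, x ∈ M.killedFrom N i}
  add_mem' := by
    rintro x y ⟨N, hx⟩ ⟨N', hy⟩
    exact ⟨max N N', add_mem (M.killedFrom_mono (le_max_left N N') i hx)
      (M.killedFrom_mono (le_max_right N N') i hy)⟩
  zero_mem' := ⟨0, zero_mem _⟩
  smul_mem' c x := fun ⟨N, hx⟩ => ⟨N, Submodule.smul_mem _ c hx⟩

theorem eventuallyZero_closed : M.Closed M.eventuallyZero :=
  fun i j g x ⟨N, hx⟩ => ⟨N, M.killedFrom_closed N i j g x hx⟩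

theorem mem_eventuallyZero_of_act_eq_zero (hA : C.TypeAInf) (hT : C.TransCond) {i j : ℕ}
    {g : C.Hom i j} {x : M.V i} (hg : M.act g x = 0) : x ∈ M.eventuallyZero i := by
  refine ⟨j, fun l hjl f => ?_⟩
  obtain ⟨h⟩ := (C.nonempty_iff j l).2 hjl
  obtain ⟨u, rfl⟩ := C.exists_comp_eq hA hT f (C.comp h g)
  simp [M.act_comp, hg]

theorem Noetherian.exists_eventuallyZero_le_killedFrom (hM : M.Noetherian) :
    ∃ N, ∀ i, M.eventuallyZero i ≤ M.killedFrom N i := by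
  obtain ⟨n, d, v, hv, hmin⟩ := hM _ M.eventuallyZero_closed
  choose N hN using hv
  refine ⟨Finset.univ.sup N, hmin _ (M.killedFrom_closed _) fun m => ?_⟩
  exact M.killedFrom_mono (Finset.le_sup (Finset.mem_univ m)) (d m) (hN m)

end CMod

/-- if `V` is a Noetherian `kC`-module over a locally finite EI
category of type `A∞` satisfying the transitivity condition, then for all
sufficiently large `j` the map `α_j : V_j → V_{j+1}` is injective. -/
theorem stmt_14 {k : Type} [CommRing k] (C : EICat) (hA : C.TypeAInf)
    (hT : C.TransCond) (α : ∀ j, C.Hom j (j + 1))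
    (M : CMod k C) (hM : M.Noetherian) :
    ∃ N : ℕ, ∀ j : ℕ, N ≤ j → Function.Injective (M.act (α j)) := by
  obtain ⟨N, hN⟩ := hM.exists_eventuallyZero_le_killedFrom
  refine ⟨N, fun j hj => LinearMap.ker_eq_bot.1 (eq_bot_iff.2 fun x hx => ?_)⟩
  have hx' := hN j (M.mem_eventuallyZero_of_act_eq_zero hA hT (LinearMap.mem_ker.1 hx))
  rwa [M.killedFrom_eq_bot hj] at hx'
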